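/- arXiv:2603.18080 — 3 statements merged into one kernel-verified Lean document; each statement's English description precedes it below -/
import Mathlib

section
/- Let d ≥ 2, m ≥ 1, and parameters p_i ≥ 0, λ_i > 1 (i = 1,…,m) with ∑_i p_i ≤ 1. Consider the channel W on output alphabet (Fin m × Fin d) ⊔ {z} given by W((i,y)|x) = p_i·(β_{λ_i} + η_{λ_i}·1{y = x}) and W(z|x) = 1 − ∑_i p_i, where β_λ = 1/(λ+d−1) and η_λ = (λ−1)/(λ+d−1). Assume S := ∑_i p_i η_{λ_i}² > 0. Fix n ≥ 1 and a deterministic input assignment x : Fin n → Fin d with empirical frequency vector θ ∈ ℝ^d, θ_a = (1/n)·#{t : x_t = a}, and let Y_1,…,Y_n be independent with Y_t ~ W(·|x_t). Let N_{(i,y)} count the users with output (i,y), M_i = ∑_y N_{(i,y)}, and define the estimator θ̃ = 𝟙/d + (1/S)·∑_{i=1}^m η_{λ_i}·(N^{(i)}/n − (M_i/(nd))·𝟙), where N^{(i)} = (N_{(i,1)},…,N_{(i,d)}). Then E[θ̃] = θ, θ̃ − θ lies in the sum-zero subspace, and E‖θ̃ − θ‖₂² = ((d−1)/(nd))·(1/S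 − 1), independent of θ. -/
/-!
With the score `φ_a(i, y) = η_i (1{y = a} - 1/d)`, `φ_a(z) = 0`, the counts give
`n S (θ̃_a - 1/d) = ∑_t φ_a(Y_t)`, and `d β_i + η_i = 1` gives `E φ_a(Y_t) = S (1{x_t = a} - 1/d)`.
Hence `θ̃_a - θ_a = (n S)⁻¹ ∑_t (φ_a(Y_t) - E φ_a(Y_t))` is a sum of independent centred terms:
its mean vanishes, cross terms drop out of the second moment, and the variance of one report,
summed over `a`, is `(1 - 1/d) S - (1 - 1/d) S²`.
-/

open Finset

section ProductChannel

variable {ι A R : Type*} [Fintype ι] [DecidableEq ι] [Fintype A] [CommRing R] {W : ι → A → R}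

theorem sum_prod_mul_prod (W φ : ι → A → R) :
    ∑ s : ι → A, (∏ t, W t (s t)) * ∏ t, φ t (s t) = ∏ t, ∑ b, W t b * φ t b := by
  simp_rw [← prod_mul_distrib]
  exact (Fintype.prod_sum fun t b => W t b * φ t b).symm

theorem sum_prod_eq_one (hW : ∀ t, ∑ b, W t b = 1) : ∑ s : ι → A, ∏ t, W t (s t) = 1 := by
  simpa [hW] using sum_prod_mul_prod W fun _ _ => (1 : R)

theorem sum_prod_mul_apply (hW : ∀ t, ∑ b, W t b = 1) (t₀ : ι) (g : A → R) :
    ∑ s : ι → A, (∏ t, W t (s t)) * g (s t₀) = ∑ b, W t₀ b * g b := by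
  have key := sum_prod_mul_prod W fun t b => if t = t₀ then g b else 1
  have lhs (s : ι → A) : ∏ t, (if t = t₀ then g (s t) else 1) = g (s t₀) := by
    rw [Fintype.prod_eq_single t₀ fun t ht => if_neg ht, if_pos rfl]
  have rhs : ∏ t, ∑ b, W t b * (if t = t₀ then g b else 1) = ∑ b, W t₀ b * g b := by
    rw [Fintype.prod_eq_single t₀ fun t ht => by simp [ht, hW]]
    simp
  simpa only [lhs, rhs] using key

theorem sum_prod_mul_apply_mul_apply (hW : ∀ t, ∑ b, W t b = 1) {t₀ t₁ : ι} (hne : t₀ ≠ t₁)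
    (g h : A → R) :
    ∑ s : ι → A, (∏ t, W t (s t)) * (g (s t₀) * h (s t₁))
      = (∑ b, W t₀ b * g b) * ∑ b, W t₁ b * h b := by
  have key := sum_prod_mul_prod W fun t b => if t = t₀ then g b else if t = t₁ then h b else 1
  have lhs (s : ι → A) :
      ∏ t, (if t = t₀ then g (s t) else if t = t₁ then h (s t) else 1) = g (s t₀) * h (s t₁) := by
    rw [Fintype.prod_eq_mul t₀ t₁ hne fun t ht => by simp [ht.1, ht.2]]
    simp [hne.symm]
  have rhs : ∏ t, ∑ b, W t b * (if t = t₀ then g b else if t = t₁ then h b else 1)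
      = (∑ b, W t₀ b * g b) * ∑ b, W t₁ b * h b := by
    rw [Fintype.prod_eq_mul t₀ t₁ hne fun t ht => by simp [ht.1, ht.2, hW]]
    simp [hne.symm]
  simpa only [lhs, rhs] using key

theorem sum_prod_mul_sum (hW : ∀ t, ∑ b, W t b = 1) (g : ι → A → R) :
    ∑ s : ι → A, (∏ t, W t (s t)) * ∑ t, g t (s t) = ∑ t, ∑ b, W t b * g t b := by
  simp_rw [mul_sum]
  rw [sum_comm]
  exact sum_congr rfl fun t _ => sum_prod_mul_apply hW t (g t)

theorem sum_prod_mul_sum_sq (hW : ∀ t, ∑ b, W t b = 1) (g : ι → A → R)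
    (hg : ∀ t, ∑ b, W t b * g t b = 0) :
    ∑ s : ι → A, (∏ t, W t (s t)) * (∑ t, g t (s t)) ^ 2 = ∑ t, ∑ b, W t b * g t b ^ 2 := by
  have cross : ∀ t t', ∑ s : ι → A, (∏ u, W u (s u)) * (g t (s t) * g t' (s t'))
      = if t = t' then ∑ b, W t b * g t b ^ 2 else 0 := by
    intro t t'
    split_ifs with h
    · subst h
      simpa only [sq] using sum_prod_mul_apply hW t fun b => g t b * g t b
    · rw [sum_prod_mul_apply_mul_apply hW h, hg, zero_mul]
  simp_rw [sq, sum_mul_sum, mul_sum]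
  rw [sum_comm]
  simp_rw [sum_comm (s := (univ : Finset (ι → A))), cross, sum_ite_eq, mem_univ, if_true, sq]

theorem sum_prod_mul_eq_of_sub_eq_mul_sum (hW : ∀ t, ∑ b, W t b = 1) {f : (ι → A) → R} {μ c : R}
    {g : ι → A → R} (hg : ∀ t, ∑ b, W t b * g t b = 0)
    (hf : ∀ s, f s - μ = c * ∑ t, g t (s t)) :
    ∑ s : ι → A, (∏ t, W t (s t)) * f s = μ := by
  have split s : (∏ t, W t (s t)) * f s
      = (∏ t, W t (s t)) * μ + c * ((∏ t, W t (s t)) * ∑ t, g t (s t)) := by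
    rw [← sub_add_cancel (f s) μ, hf]
    ring
  simp_rw [split, sum_add_distrib, ← sum_mul, ← mul_sum, sum_prod_eq_one hW,
    sum_prod_mul_sum hW, hg, sum_const_zero, mul_zero, one_mul, add_zero]

theorem sum_prod_mul_sum_sub_sq_of_sub_eq_mul_sum {κ : Type*} [Fintype κ]
    (hW : ∀ t, ∑ b, W t b = 1) {f : (ι → A) → κ → R} {μ : κ → R} {c : R}
    {g : ι → κ → A → R} (hg : ∀ t k, ∑ b, W t b * g t k b = 0)
    (hf : ∀ s k, f s k - μ k = c * ∑ t, g t k (s t)) :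
    ∑ s : ι → A, (∏ t, W t (s t)) * ∑ k, (f s k - μ k) ^ 2
      = c ^ 2 * ∑ t, ∑ k, ∑ b, W t b * g t k b ^ 2 := by
  simp_rw [hf, mul_pow, mul_sum]
  rw [sum_comm]
  simp_rw [mul_left_comm _ (c ^ 2), ← mul_sum, sum_prod_mul_sum_sq hW _ fun t => hg t _]
  rw [sum_comm]

end ProductChannel

theorem sum_mul_sub_sq {A R : Type*} [Fintype A] [CommRing R] {w f : A → R} {c : R}
    (hw : ∑ b, w b = 1) (hc : ∑ b, w b * f b = c) :
    ∑ b, w b * (f b - c) ^ 2 = ∑ b, w b * f b ^ 2 - c ^ 2 := by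
  have expand : ∀ b, w b * (f b - c) ^ 2 = w b * f b ^ 2 - 2 * c * (w b * f b) + c ^ 2 * w b :=
    fun b => by ring
  simp_rw [expand, sum_add_distrib, sum_sub_distrib, ← mul_sum, hw, hc]
  ring

theorem sum_apply_eq_sum_card_mul {ι A R : Type*} [Fintype ι] [Fintype A] [DecidableEq A]
    [NonAssocSemiring R] (s : ι → A) (f : A → R) :
    ∑ t, f (s t) = ∑ b, (#{t | s t = b} : R) * f b := by
  simp_rw [← sum_boole, sum_mul, ite_mul, one_mul, zero_mul]
  rw [sum_comm]
  simp

noncomputable section GRRMixture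

variable {d m : ℕ}

def centeredIndicator (d : ℕ) (x a : Fin d) : ℝ := (if x = a then 1 else 0) - 1 / d

theorem centeredIndicator_comm (x a : Fin d) :
    centeredIndicator d x a = centeredIndicator d a x := by
  simp only [centeredIndicator, eq_comm]

theorem sum_centeredIndicator (hd : (d : ℝ) ≠ 0) (x : Fin d) :
    ∑ a, centeredIndicator d x a = 0 := by
  simp [centeredIndicator, sum_sub_distrib, hd]

theorem sum_centeredIndicator_sq (hd : (d : ℝ) ≠ 0) (x : Fin d) :
    ∑ a, centeredIndicator d x a ^ 2 = 1 - 1 / d := by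
  have expand : ∀ a, centeredIndicator d x a ^ 2
      = (if x = a then 1 else 0) * (1 - 2 / d) + 1 / (d : ℝ) ^ 2 := fun a => by
    unfold centeredIndicator; split_ifs <;> ring
  simp only [expand, sum_add_distrib, ← sum_mul, sum_ite_eq, mem_univ, if_true, sum_const,
    card_univ, Fintype.card_fin, nsmul_eq_mul]
  field_simp
  ring

theorem sum_centeredIndicator_apply {ι : Type*} [Fintype ι] (x : ι → Fin d) (a : Fin d) :
    ∑ t, centeredIndicator d (x t) a = #{t | x t = a} - Fintype.card ι / d := by
  simp [centeredIndicator, sum_sub_distrib, sum_boole, div_eq_mul_inv]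

def grrMixture (p β η : Fin m → ℝ) (x : Fin d) : (Fin m × Fin d) ⊕ Unit → ℝ :=
  Sum.elim (fun iy => p iy.1 * (β iy.1 + η iy.1 * if iy.2 = x then 1 else 0))
    fun _ => 1 - ∑ i, p i

def grrScore (η : Fin m → ℝ) (a : Fin d) : (Fin m × Fin d) ⊕ Unit → ℝ :=
  Sum.elim (fun iy => η iy.1 * centeredIndicator d iy.2 a) 0

variable {p β η : Fin m → ℝ}

theorem sum_grrMixture_block (hβη : ∀ i, d * β i + η i = 1) (x : Fin d) (i : Fin m) :
    ∑ y, grrMixture p β η x (.inl (i, y)) = p i := by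
  simp only [grrMixture, Sum.elim_inl, mul_ite, mul_one, mul_zero, mul_add, sum_add_distrib,
    sum_const, card_univ, Fintype.card_fin, nsmul_eq_mul, sum_ite_eq', mem_univ, if_true]
  linear_combination p i * hβη i

theorem sum_grrMixture (hβη : ∀ i, d * β i + η i = 1) (x : Fin d) :
    ∑ b, grrMixture p β η x b = 1 := by
  simp only [Fintype.sum_sum_type, Fintype.sum_prod_type, sum_grrMixture_block hβη]
  simp [grrMixture]

theorem sum_grrMixture_mul_grrScore (hd : (d : ℝ) ≠ 0) (x a : Fin d) :
    ∑ b, grrMixture p β η x b * grrScore η a b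
      = (∑ i, p i * η i ^ 2) * centeredIndicator d x a := by
  simp only [Fintype.sum_sum_type, Fintype.sum_prod_type, grrMixture, grrScore, Sum.elim_inl,
    Sum.elim_inr, Pi.zero_apply, mul_zero, sum_const_zero, add_zero, sum_mul]
  refine sum_congr rfl fun i _ => ?_
  have expand : ∀ y, p i * (β i + η i * (if y = x then 1 else 0)) * (η i * centeredIndicator d y a)
      = p i * β i * η i * centeredIndicator d y a
        + p i * η i ^ 2 * ((if y = x then 1 else 0) * centeredIndicator d y a) := fun y => by ring
  simp_rw [expand, sum_add_distrib, ← mul_sum, ite_mul, one_mul, zero_mul, sum_ite_eq',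
    mem_univ, if_true]
  simp_rw [centeredIndicator_comm _ a, sum_centeredIndicator hd]
  ring

theorem sum_grrScore (hd : (d : ℝ) ≠ 0) (b : (Fin m × Fin d) ⊕ Unit) :
    ∑ a, grrScore η a b = 0 := by
  cases b with
  | inl iy => simp [grrScore, ← mul_sum, sum_centeredIndicator hd]
  | inr => simp [grrScore]

theorem sum_grrMixture_mul_sum_grrScore_sq (hd : (d : ℝ) ≠ 0) (hβη : ∀ i, d * β i + η i = 1)
    (x : Fin d) :
    ∑ b, grrMixture p β η x b * ∑ a, grrScore η a b ^ 2 = (∑ i, p i * η i ^ 2) * (1 - 1 / d) := by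
  simp only [Fintype.sum_sum_type, Fintype.sum_prod_type, grrScore, Sum.elim_inl, Sum.elim_inr,
    Pi.zero_apply, mul_pow, ← mul_sum, sum_centeredIndicator_sq hd]
  simp_rw [← sum_mul, sum_grrMixture_block hβη]
  simp [sum_mul, mul_assoc]

theorem sum_grrScore_apply {ι : Type*} [Fintype ι] (s : ι → (Fin m × Fin d) ⊕ Unit) (a : Fin d) :
    ∑ t, grrScore η a (s t) = ∑ i, η i * (#{t | s t = .inl (i, a)}
      - (∑ y, #{t | s t = .inl (i, y)} : ℕ) / d) := by
  rw [sum_apply_eq_sum_card_mul, Fintype.sum_sum_type, Fintype.sum_prod_type]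
  simp only [grrScore, centeredIndicator, Sum.elim_inl, Sum.elim_inr, Pi.zero_apply, mul_zero,
    sum_const_zero, add_zero, Nat.cast_sum]
  refine sum_congr rfl fun i _ => ?_
  simp_rw [mul_left_comm _ (η i), ← mul_sum, mul_sub, mul_ite, mul_one, mul_zero, sum_sub_distrib,
    sum_ite_eq', mem_univ, if_true, ← sum_mul]
  ring

theorem sum_sum_grrMixture_mul_sub_sq (hd : (d : ℝ) ≠ 0) (hβη : ∀ i, d * β i + η i = 1)
    (x : Fin d) :
    ∑ a, ∑ b, grrMixture p β η x b
        * (grrScore η a b - (∑ i, p i * η i ^ 2) * centeredIndicator d x a) ^ 2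
      = (1 - 1 / d) * ((∑ i, p i * η i ^ 2) - (∑ i, p i * η i ^ 2) ^ 2) := by
  simp_rw [sum_mul_sub_sq (sum_grrMixture hβη x) (sum_grrMixture_mul_grrScore hd x _),
    sum_sub_distrib, mul_pow, ← mul_sum, sum_centeredIndicator_sq hd]
  rw [sum_comm]
  simp_rw [← mul_sum, sum_grrMixture_mul_sum_grrScore_sq hd hβη]
  ring

end GRRMixture

theorem augmented_grr_mixture_risk_general (d m n : ℕ) (hd : 2 ≤ d) (hn : 1 ≤ n)
    (p lam : Fin m → ℝ) (hlam : ∀ i, 1 < lam i)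
    (β η : Fin m → ℝ)
    (hβ : ∀ i, β i = 1 / (lam i + d - 1))
    (hη : ∀ i, η i = (lam i - 1) / (lam i + d - 1))
    (S : ℝ) (hS : S = ∑ i, p i * (η i) ^ 2) (hSpos : 0 < S)
    (W : Fin d → ((Fin m × Fin d) ⊕ Unit) → ℝ)
    (hWin : ∀ x i y, W x (Sum.inl (i, y)) = p i * (β i + η i * (if y = x then 1 else 0)))
    (hWnull : ∀ x, W x (Sum.inr ()) = 1 - ∑ i, p i)
    (x : Fin n → Fin d)
    (θ : Fin d → ℝ)
    (hθ : ∀ a, θ a = ((Finset.univ.filter (fun t => x t = a)).card : ℝ) / n)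
    (N : (Fin n → ((Fin m × Fin d) ⊕ Unit)) → Fin m → Fin d → ℕ)
    (hN : ∀ s i y, N s i y = (Finset.univ.filter (fun t => s t = Sum.inl (i, y))).card)
    (M : (Fin n → ((Fin m × Fin d) ⊕ Unit)) → Fin m → ℕ)
    (hM : ∀ s i, M s i = ∑ y, N s i y)
    (est : (Fin n → ((Fin m × Fin d) ⊕ Unit)) → Fin d → ℝ)
    (hest : ∀ s a, est s a = 1 / (d : ℝ) +
        (1 / S) * ∑ i, η i * ((N s i a : ℝ) / n - (M s i : ℝ) / (n * d))) :
    -- unbiasedness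
    (∀ a, ∑ s : Fin n → ((Fin m × Fin d) ⊕ Unit), (∏ t, W (x t) (s t)) * est s a = θ a)
    -- θ̃ − θ lies in the sum-zero subspace
    ∧ (∀ s : Fin n → ((Fin m × Fin d) ⊕ Unit), ∑ a, (est s a - θ a) = 0)
    -- exact fixed-composition risk
    ∧ (∑ s : Fin n → ((Fin m × Fin d) ⊕ Unit),
          (∏ t, W (x t) (s t)) * ∑ a, (est s a - θ a) ^ 2
        = ((d : ℝ) - 1) / (n * d) * (1 / S - 1)) := by
  have hd0 : (d : ℝ) ≠ 0 := by positivity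
  have hn0 : (n : ℝ) ≠ 0 := by positivity
  have hβη : ∀ i, (d : ℝ) * β i + η i = 1 := fun i => by
    have : lam i + d - 1 ≠ 0 := by linarith [hlam i, (by exact_mod_cast hd : (2 : ℝ) ≤ d)]
    rw [hβ, hη]
    field_simp
    ring
  obtain rfl : W = grrMixture p β η := funext₂ fun x b => by
    rcases b with ⟨i, y⟩ | ⟨⟩ <;> simp [grrMixture, hWin, hWnull]
  set ψ : Fin n → Fin d → (Fin m × Fin d) ⊕ Unit → ℝ :=
    fun t a b => grrScore η a b - S * centeredIndicator d (x t) a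
  have hrow t : ∑ b, grrMixture p β η (x t) b = 1 := sum_grrMixture hβη (x t)
  have hψ t a : ∑ b, grrMixture p β η (x t) b * ψ t a b = 0 := by
    simp_rw [ψ, mul_sub, sum_sub_distrib, ← sum_mul, hrow, sum_grrMixture_mul_grrScore hd0, hS]
    ring
  have counts s a : ∑ i, η i * ((N s i a : ℝ) / n - (M s i : ℝ) / (n * d))
      = (∑ t, grrScore η a (s t)) / n := by
    rw [sum_grrScore_apply, sum_div]
    refine sum_congr rfl fun i _ => ?_
    simp only [hM, hN]
    field_simp
  have dev s a : est s a - θ a = (n * S)⁻¹ * ∑ t, ψ t a (s t) := by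
    rw [hest, counts, hθ, sum_sub_distrib, ← mul_sum, sum_centeredIndicator_apply, Fintype.card_fin]
    field_simp
    ring
  refine ⟨fun a => sum_prod_mul_eq_of_sub_eq_mul_sum hrow (hψ · a) (dev · a), fun s => ?_, ?_⟩
  · simp_rw [dev, ← mul_sum]
    rw [sum_comm]
    simp [ψ, sum_sub_distrib, sum_grrScore hd0, ← mul_sum, sum_centeredIndicator hd0]
  · rw [sum_prod_mul_sum_sub_sq_of_sub_eq_mul_sum hrow hψ dev]
    simp only [ψ, hS, sum_sum_grrMixture_mul_sub_sq hd0 hβη, sum_const, card_univ,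
      Fintype.card_fin, nsmul_eq_mul]
    rw [← hS]
    field_simp

/-- **Exact fixed-composition risk of the projected inverse estimator for GRR mixtures
with a null symbol** (Theorem 10.2(ii)).  Output alphabet `(Fin m × Fin d) ⊕ Unit`, channel
`W((i,y)|x) = pᵢ(β_{λᵢ} + η_{λᵢ}·1{y=x})`, `W(z|x) = 1 − ∑ pᵢ`.  For a deterministic input
assignment with empirical frequency `θ` and the affine-projected inverse estimator `θ̃`
(expectations written as explicit finite sums over output tuples): `θ̃` is unbiased,
`θ̃ − θ` is sum-zero, and `E‖θ̃ − θ‖₂² = ((d−1)/(nd))(1/S − 1)` with `S = ∑ pᵢ η_{λᵢ}²`. -/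
theorem augmented_grr_mixture_risk (d m n : ℕ) (hd : 2 ≤ d) (hm : 1 ≤ m) (hn : 1 ≤ n)
    (p lam : Fin m → ℝ) (hp : ∀ i, 0 ≤ p i) (hlam : ∀ i, 1 < lam i)
    (hpsum : ∑ i, p i ≤ 1)
    (β η : Fin m → ℝ)
    (hβ : ∀ i, β i = 1 / (lam i + d - 1))
    (hη : ∀ i, η i = (lam i - 1) / (lam i + d - 1))
    (S : ℝ) (hS : S = ∑ i, p i * (η i) ^ 2) (hSpos : 0 < S)
    (W : Fin d → ((Fin m × Fin d) ⊕ Unit) → ℝ)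
    (hWin : ∀ x i y, W x (Sum.inl (i, y)) = p i * (β i + η i * (if y = x then 1 else 0)))
    (hWnull : ∀ x, W x (Sum.inr ()) = 1 - ∑ i, p i)
    (x : Fin n → Fin d)
    (θ : Fin d → ℝ)
    (hθ : ∀ a, θ a = ((Finset.univ.filter (fun t => x t = a)).card : ℝ) / n)
    (N : (Fin n → ((Fin m × Fin d) ⊕ Unit)) → Fin m → Fin d → ℕ)
    (hN : ∀ s i y, N s i y = (Finset.univ.filter (fun t => s t = Sum.inl (i, y))).card)
    (M : (Fin n → ((Fin m × Fin d) ⊕ Unit)) → Fin m → ℕ)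
    (hM : ∀ s i, M s i = ∑ y, N s i y)
    (est : (Fin n → ((Fin m × Fin d) ⊕ Unit)) → Fin d → ℝ)
    (hest : ∀ s a, est s a = 1 / (d : ℝ) +
        (1 / S) * ∑ i, η i * ((N s i a : ℝ) / n - (M s i : ℝ) / (n * d))) :
    -- unbiasedness
    (∀ a, ∑ s : Fin n → ((Fin m × Fin d) ⊕ Unit), (∏ t, W (x t) (s t)) * est s a = θ a)
    -- θ̃ − θ lies in the sum-zero subspace
    ∧ (∀ s : Fin n → ((Fin m × Fin d) ⊕ Unit), ∑ a, (est s a - θ a) = 0)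
    -- exact fixed-composition risk
    ∧ (∑ s : Fin n → ((Fin m × Fin d) ⊕ Unit),
          (∏ t, W (x t) (s t)) * ∑ a, (est s a - θ a) ^ 2
        = ((d : ℝ) - 1) / (n * d) * (1 / S - 1)) :=
  augmented_grr_mixture_risk_general d m n hd hn p lam hlam β η hβ hη S hS hSpos W hWin hWnull x θ
    hθ N hN M hM est hest
end

section
/- Let d ≥ 3 be an integer, let s be an integer with 1 ≤ s ≤ d − 1, and let λ > 1 be real. Then λ/((λ+1)·(d + s(λ−1))) ≤ 1/(d + 2√(d−1)), with equality if and only if s = 1 and λ = √(d−1). -/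
/-- **The orbitwise signal-to-budget slope is maximized uniquely by the singleton GRR
template at `λ* = √(d−1)`** (core of Theorems 10.2(iii) and 11.2).  For integers `d ≥ 3`,
`1 ≤ s ≤ d − 1`, and real `λ > 1`:
`λ/((λ+1)(d+s(λ−1))) ≤ 1/(d+2√(d−1))`, with equality iff `s = 1` and `λ = √(d−1)`. -/
theorem grr_slope_optimal (d s : ℕ) (hd : 3 ≤ d) (hs1 : 1 ≤ s) (hs2 : s ≤ d - 1)
    (lam : ℝ) (hlam : 1 < lam) :
    lam / ((lam + 1) * ((d : ℝ) + (s : ℝ) * (lam - 1)))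
        ≤ 1 / ((d : ℝ) + 2 * Real.sqrt ((d : ℝ) - 1))
    ∧ (lam / ((lam + 1) * ((d : ℝ) + (s : ℝ) * (lam - 1)))
          = 1 / ((d : ℝ) + 2 * Real.sqrt ((d : ℝ) - 1))
        ↔ (s = 1 ∧ lam = Real.sqrt ((d : ℝ) - 1))) := by
  set a := Real.sqrt ((d : ℝ) - 1) with ha
  have hd3 : (3 : ℝ) ≤ (d : ℝ) := by exact_mod_cast hd
  have ha2 : a ^ 2 = (d : ℝ) - 1 := Real.sq_sqrt (by linarith)
  have ha0 : 0 < a := Real.sqrt_pos.mpr (by linarith)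
  have hs1' : (1 : ℝ) ≤ (s : ℝ) := by exact_mod_cast hs1
  have hD1 : 0 < (lam + 1) * ((d : ℝ) + (s : ℝ) * (lam - 1)) := by
    have h1 : 0 ≤ (s : ℝ) * (lam - 1) := mul_nonneg (by linarith) (by linarith)
    nlinarith
  have hD2 : 0 < (d : ℝ) + 2 * a := by linarith
  have key : lam * ((d : ℝ) + 2 * a)
      ≤ (lam + 1) * ((d : ℝ) + (s : ℝ) * (lam - 1)) := by
    nlinarith [sq_nonneg (lam - a),
      mul_nonneg (mul_nonneg (by linarith : (0:ℝ) ≤ (s:ℝ) - 1)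
        (by linarith : (0:ℝ) ≤ lam + 1)) (by linarith : (0:ℝ) ≤ lam - 1)]
  constructor
  · rw [div_le_div_iff₀ hD1 hD2]
    linarith
  · constructor
    · intro heq
      rw [div_eq_div_iff hD1.ne' hD2.ne'] at heq
      have t1 : 0 ≤ ((s : ℝ) - 1) * (lam + 1) * (lam - 1) :=
        mul_nonneg (mul_nonneg (by linarith) (by linarith)) (by linarith)
      have t2 : 0 ≤ (lam - a) ^ 2 := sq_nonneg _
      have hsum : ((s : ℝ) - 1) * (lam + 1) * (lam - 1) + (lam - a) ^ 2 = 0 := by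
        nlinarith
      have h1 : ((s : ℝ) - 1) * (lam + 1) * (lam - 1) = 0 := by linarith
      have h2 : (lam - a) ^ 2 = 0 := by linarith
      have hla : lam = a := by
        have := pow_eq_zero_iff (n := 2) (by norm_num) |>.mp h2
        linarith
      have hs : (s : ℝ) = 1 := by
        rcases mul_eq_zero.mp h1 with h | h
        · rcases mul_eq_zero.mp h with h | h
          · linarith
          · linarith
        · linarith
      exact ⟨by exact_mod_cast hs, hla⟩
    · rintro ⟨rfl, rfl⟩
      rw [div_eq_div_iff hD1.ne' hD2.ne']
      push_cast
      nlinarith [ha2]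
end

section
/- For an integer d ≥ 3, an integer s with 1 ≤ s ≤ d−1, and real λ > 1, define C_{d,s}(λ) = s(d−s)(λ−1)²(λ+1) / (λ(d−1)(λs + d − s)) and R_{d,s}(λ) = (λ²s(s−1) + 2λs(d−s) + (d−s)(d−s−1)) / (s(d−s)(λ−1)²). Then for all integers 1 ≤ s < s' ≤ d−1 and reals λ, λ' > 1 such that C_{d,s}(λ) = C_{d,s'}(λ'), one has R_{d,s}(λ) < R_{d,s'}(λ'). -/
/-!
Put `t = (λ - 1) / (λs + d - s)`, `P = s(d - s)t²` and `w = (d - 2s)t > -1`. Then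
`R = (d - 1 - P) / (dP)`, and the normalized budget `c = (d - 1)/d · C` satisfies
`P(c + 2 + w) = c(1 + w)`. Eliminating `P`,
`w|w|(c + 2 + w)/(1 + w) = c · (d - 2s)|d - 2s| / (s(d - s))`. At fixed `c` the left side is
strictly increasing in `w`, the right side strictly decreasing in `s ∈ (0, d)`, so at a matched
budget a larger subset has a smaller `w`, hence a smaller `P = c(1 + w)/(c + 2 + w)` and a larger
risk.
-/

open Set

namespace SubsetSelection

theorem strictMono_mul_abs_self : StrictMono fun x : ℝ => x * |x| := by
  intro u v huv
  rcases abs_cases u with ⟨hu, _⟩ | ⟨hu, _⟩ <;> rcases abs_cases v with ⟨hv, _⟩ | ⟨hv, _⟩ <;>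
    simp only [hu, hv] <;> nlinarith

theorem monotoneOn_mul_abs_self_div_one_add :
    MonotoneOn (fun x : ℝ => x * |x| / (1 + x)) (Ioi (-1)) := by
  intro u (hu : -1 < u) v (hv : -1 < v) huv
  have hu1 : 0 < 1 + u := by linarith
  have hv1 : 0 < 1 + v := by linarith
  dsimp only
  rw [div_le_div_iff₀ hu1 hv1]
  rcases le_or_gt 0 u with hu0 | hu0
  · rw [abs_of_nonneg hu0, abs_of_nonneg (hu0.trans huv)]
    nlinarith [mul_nonneg (sub_nonneg.2 huv) (by nlinarith : (0:ℝ) ≤ (1 + u) * (1 + v) - 1)]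
  rcases le_or_gt 0 v with hv0 | hv0
  · rw [abs_of_neg hu0, abs_of_nonneg hv0]
    nlinarith [mul_nonneg (mul_self_nonneg u) hv1.le, mul_nonneg (mul_self_nonneg v) hu1.le]
  · rw [abs_of_neg hu0, abs_of_neg hv0]
    nlinarith [mul_nonneg (sub_nonneg.2 huv) (by nlinarith : (0:ℝ) ≤ 1 - (1 + u) * (1 + v))]

noncomputable def budgetProfile (c w : ℝ) : ℝ := w * |w| * (c + 2 + w) / (1 + w)

theorem strictMonoOn_budgetProfile {c : ℝ} (hc : -1 ≤ c) :
    StrictMonoOn (budgetProfile c) (Ioi (-1)) := by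
  -- `budgetProfile c w = w|w| + (c + 1) · w|w|/(1 + w)`
  have h := (strictMono_mul_abs_self.strictMonoOn (Ioi (-1))).add_monotone
    fun u hu v hv huv => mul_le_mul_of_nonneg_left
      (monotoneOn_mul_abs_self_div_one_add hu hv huv) (by linarith : 0 ≤ c + 1)
  refine h.congr fun w (hw : -1 < w) => ?_
  have : 1 + w ≠ 0 := by linarith
  simp only [budgetProfile]
  field_simp
  ring

noncomputable def imbalance (d a : ℝ) : ℝ := (d - 2 * a) * |d - 2 * a| / (a * (d - a))

theorem strictAntiOn_imbalance (d : ℝ) : StrictAntiOn (imbalance d) (Ioo 0 d) := by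
  intro a ⟨ha, had⟩ a' ⟨ha', ha'd⟩ haa'
  have hm : 0 < a * (d - a) := mul_pos ha (by linarith)
  have hm' : 0 < a' * (d - a') := mul_pos ha' (by linarith)
  simp only [imbalance]
  rw [div_lt_div_iff₀ hm' hm]
  rcases le_or_gt 0 (d - 2 * a') with hx' | hx'
  · rw [abs_of_nonneg hx', abs_of_nonneg (by linarith)]
    nlinarith [mul_nonneg (mul_self_nonneg (d - 2 * a'))
        (mul_nonneg (sub_nonneg.2 haa'.le) (by linarith : (0:ℝ) ≤ d - a - a')),
      mul_pos hm' (by nlinarith : (0:ℝ) < (d - 2 * a) * (d - 2 * a) - (d - 2 * a') * (d - 2 * a'))]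
  rcases le_or_gt 0 (d - 2 * a) with hx | hx
  · rw [abs_of_neg hx', abs_of_nonneg hx]
    nlinarith [mul_nonneg (mul_self_nonneg (d - 2 * a)) hm'.le,
      mul_pos (mul_pos_of_neg_of_neg hx' hx') hm]
  · rw [abs_of_neg hx', abs_of_neg hx]
    nlinarith [mul_nonneg (mul_self_nonneg (d - 2 * a))
        (mul_nonneg (sub_nonneg.2 haa'.le) (by linarith : (0:ℝ) ≤ a + a' - d)),
      mul_pos hm (by nlinarith : (0:ℝ) < (d - 2 * a') * (d - 2 * a') - (d - 2 * a) * (d - 2 * a))]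

noncomputable def signalCurve (c w : ℝ) : ℝ := c * (1 + w) / (c + 2 + w)

theorem strictMonoOn_signalCurve {c : ℝ} (hc : 0 < c) :
    StrictMonoOn (signalCurve c) (Ioi (-1)) := by
  intro u (hu : -1 < u) v (hv : -1 < v) huv
  simp only [signalCurve]
  rw [div_lt_div_iff₀ (by linarith) (by linarith)]
  nlinarith [mul_pos (mul_pos hc (by linarith : (0:ℝ) < c + 1)) (sub_pos.2 huv)]

noncomputable def budget (d a lam : ℝ) : ℝ :=
  a * (d - a) * (lam - 1) ^ 2 * (lam + 1) / (lam * (d - 1) * (lam * a + d - a))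

noncomputable def risk (d a lam : ℝ) : ℝ :=
  (lam ^ 2 * a * (a - 1) + 2 * lam * a * (d - a) + (d - a) * (d - a - 1)) /
    (a * (d - a) * (lam - 1) ^ 2)

noncomputable def rate (d a lam : ℝ) : ℝ := (lam - 1) / (lam * a + d - a)

noncomputable def skew (d a lam : ℝ) : ℝ := (d - 2 * a) * rate d a lam

noncomputable def signal (d a lam : ℝ) : ℝ := a * (d - a) * rate d a lam ^ 2

section

variable {d a lam : ℝ} (ha : 0 < a) (had : a < d) (hlam : 1 < lam)
include ha had hlam

theorem rate_pos : 0 < rate d a lam :=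
  div_pos (by linarith) (by nlinarith)

theorem signal_pos : 0 < signal d a lam :=
  mul_pos (mul_pos ha (by linarith)) (pow_pos (rate_pos ha had hlam) 2)

theorem neg_one_lt_skew : -1 < skew d a lam := by
  have hq : 0 < lam * a + d - a := by nlinarith
  rw [skew, rate, ← mul_div_assoc, lt_div_iff₀ hq]
  nlinarith

theorem risk_eq : risk d a lam = (d - 1 - signal d a lam) / (d * signal d a lam) := by
  have : lam * a + d - a ≠ 0 := by nlinarith
  have : d - a ≠ 0 := by linarith
  have : lam - 1 ≠ 0 := by linarith
  have : a ≠ 0 := ha.ne'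
  have : d ≠ 0 := by linarith
  simp only [risk, signal, rate]
  field_simp
  ring

theorem skew_mul_abs_skew : skew d a lam * |skew d a lam| = imbalance d a * signal d a lam := by
  have : a ≠ 0 := ha.ne'
  have : d - a ≠ 0 := by linarith
  simp only [skew, signal, imbalance, abs_mul, abs_of_pos (rate_pos ha had hlam)]
  field_simp

theorem normalized_budget_pos (hd : d ≠ 1) : 0 < (d - 1) / d * budget d a lam := by
  have : 0 < lam * a + d - a := by nlinarith
  have : 0 < a * (d - a) := mul_pos ha (by linarith)
  have : d - 1 ≠ 0 := sub_ne_zero.2 hd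
  have : (d - 1) / d * budget d a lam =
      a * (d - a) * (lam - 1) ^ 2 * (lam + 1) / (lam * d * (lam * a + d - a)) := by
    unfold budget
    field_simp
  rw [this]
  have : 0 < lam * d := mul_pos (by linarith) (by linarith)
  positivity

theorem signal_mul {c : ℝ} (hd : d ≠ 1) (hc : c = (d - 1) / d * budget d a lam) :
    signal d a lam * (c + 2 + skew d a lam) = c * (1 + skew d a lam) := by
  have : a * lam + d - a ≠ 0 := by nlinarith
  have : d - 1 ≠ 0 := sub_ne_zero.2 hd
  have : d ≠ 0 := by linarith
  have : lam ≠ 0 := by linarith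
  simp only [hc, signal, budget, skew, rate]
  field_simp
  ring

theorem budgetProfile_skew {c : ℝ} (hd : d ≠ 1) (hc : c = (d - 1) / d * budget d a lam) :
    budgetProfile c (skew d a lam) = c * imbalance d a := by
  have h1 : 1 + skew d a lam ≠ 0 := by linarith [neg_one_lt_skew ha had hlam]
  rw [budgetProfile, skew_mul_abs_skew ha had hlam, mul_assoc, signal_mul ha had hlam hd hc]
  field_simp

theorem signal_eq_signalCurve {c : ℝ} (hd : d ≠ 1) (hc : c = (d - 1) / d * budget d a lam) :
    signal d a lam = signalCurve c (skew d a lam) := by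
  have := hc ▸ normalized_budget_pos ha had hlam hd
  have := neg_one_lt_skew ha had hlam
  exact eq_div_of_mul_eq (by linarith) (signal_mul ha had hlam hd hc)

end

theorem risk_lt_risk_of_budget_eq {d a a' lam lam' : ℝ} (ha : 0 < a) (haa' : a < a')
    (ha'd : a' < d) (hd : 1 < d) (hlam : 1 < lam) (hlam' : 1 < lam')
    (hbudget : budget d a lam = budget d a' lam') : risk d a lam < risk d a' lam' := by
  have had : a < d := haa'.trans ha'd
  have ha' : 0 < a' := ha.trans haa'
  obtain ⟨c, hc⟩ : ∃ c, c = (d - 1) / d * budget d a lam := ⟨_, rfl⟩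
  have hc' : c = (d - 1) / d * budget d a' lam' := hbudget ▸ hc
  have hc_pos : 0 < c := hc ▸ normalized_budget_pos ha had hlam hd.ne'
  have hskew : skew d a' lam' < skew d a lam := by
    rw [← (strictMonoOn_budgetProfile (by linarith : -1 ≤ c)).lt_iff_lt
      (neg_one_lt_skew ha' ha'd hlam') (neg_one_lt_skew ha had hlam),
      budgetProfile_skew ha' ha'd hlam' hd.ne' hc', budgetProfile_skew ha had hlam hd.ne' hc]
    exact mul_lt_mul_of_pos_left (strictAntiOn_imbalance d ⟨ha, had⟩ ⟨ha', ha'd⟩ haa') hc_pos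
  have hsignal : signal d a' lam' < signal d a lam := by
    rw [signal_eq_signalCurve ha had hlam hd.ne' hc,
      signal_eq_signalCurve ha' ha'd hlam' hd.ne' hc']
    exact strictMonoOn_signalCurve hc_pos (neg_one_lt_skew ha' ha'd hlam')
      (neg_one_lt_skew ha had hlam) hskew
  have hP := signal_pos ha had hlam
  have hP' := signal_pos ha' ha'd hlam'
  rw [risk_eq ha had hlam, risk_eq ha' ha'd hlam', div_lt_div_iff₀ (by positivity) (by positivity)]
  nlinarith [mul_pos (mul_pos (by linarith : 0 < d) (by linarith : 0 < d - 1)) (sub_pos.2 hsignal)]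

end SubsetSelection

theorem subset_selection_monotone_general (d s s' : ℕ)
    (hs : 1 ≤ s) (hss' : s < s') (hs' : s' ≤ d - 1)
    (lam lam' : ℝ) (hlam : 1 < lam) (hlam' : 1 < lam')
    (hC : (s : ℝ) * ((d : ℝ) - (s : ℝ)) * (lam - 1) ^ 2 * (lam + 1) /
            (lam * ((d : ℝ) - 1) * (lam * (s : ℝ) + (d : ℝ) - (s : ℝ)))
        = (s' : ℝ) * ((d : ℝ) - (s' : ℝ)) * (lam' - 1) ^ 2 * (lam' + 1) /
            (lam' * ((d : ℝ) - 1) * (lam' * (s' : ℝ) + (d : ℝ) - (s' : ℝ)))) :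
    (lam ^ 2 * (s : ℝ) * ((s : ℝ) - 1) + 2 * lam * (s : ℝ) * ((d : ℝ) - (s : ℝ))
        + ((d : ℝ) - (s : ℝ)) * ((d : ℝ) - (s : ℝ) - 1)) /
        ((s : ℝ) * ((d : ℝ) - (s : ℝ)) * (lam - 1) ^ 2)
      < (lam' ^ 2 * (s' : ℝ) * ((s' : ℝ) - 1) + 2 * lam' * (s' : ℝ) * ((d : ℝ) - (s' : ℝ))
        + ((d : ℝ) - (s' : ℝ)) * ((d : ℝ) - (s' : ℝ) - 1)) /
        ((s' : ℝ) * ((d : ℝ) - (s' : ℝ)) * (lam' - 1) ^ 2) := by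
  have hs'd : s' < d := by omega
  have hd : 1 < d := by omega
  exact SubsetSelection.risk_lt_risk_of_budget_eq (Nat.cast_pos.2 hs) (Nat.cast_lt.2 hss')
    (Nat.cast_lt.2 hs'd) (Nat.one_lt_cast.2 hd) hlam hlam' hC

/-- **GRR is the unique matched-budget optimizer within the subset-selection family**
(Theorem 12.2).  With `C_{d,s}(λ) = s(d−s)(λ−1)²(λ+1)/(λ(d−1)(λs+d−s))` the canonical
chi-square budget and `R_{d,s}(λ) = (λ²s(s−1)+2λs(d−s)+(d−s)(d−s−1))/(s(d−s)(λ−1)²)` the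
matched risk functional: for `d ≥ 3`, `1 ≤ s < s' ≤ d−1`, and `λ, λ' > 1` with matched
budgets `C_{d,s}(λ) = C_{d,s'}(λ')`, one has `R_{d,s}(λ) < R_{d,s'}(λ')`. -/
theorem subset_selection_monotone (d s s' : ℕ) (hd : 3 ≤ d)
    (hs : 1 ≤ s) (hss' : s < s') (hs' : s' ≤ d - 1)
    (lam lam' : ℝ) (hlam : 1 < lam) (hlam' : 1 < lam')
    (hC : (s : ℝ) * ((d : ℝ) - (s : ℝ)) * (lam - 1) ^ 2 * (lam + 1) /
            (lam * ((d : ℝ) - 1) * (lam * (s : ℝ) + (d : ℝ) - (s : ℝ)))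
        = (s' : ℝ) * ((d : ℝ) - (s' : ℝ)) * (lam' - 1) ^ 2 * (lam' + 1) /
            (lam' * ((d : ℝ) - 1) * (lam' * (s' : ℝ) + (d : ℝ) - (s' : ℝ)))) :
    (lam ^ 2 * (s : ℝ) * ((s : ℝ) - 1) + 2 * lam * (s : ℝ) * ((d : ℝ) - (s : ℝ))
        + ((d : ℝ) - (s : ℝ)) * ((d : ℝ) - (s : ℝ) - 1)) /
        ((s : ℝ) * ((d : ℝ) - (s : ℝ)) * (lam - 1) ^ 2)
      < (lam' ^ 2 * (s' : ℝ) * ((s' : ℝ) - 1) + 2 * lam' * (s' : ℝ) * ((d : ℝ) - (s' : ℝ))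
        + ((d : ℝ) - (s' : ℝ)) * ((d : ℝ) - (s' : ℝ) - 1)) /
        ((s' : ℝ) * ((d : ℝ) - (s' : ℝ)) * (lam' - 1) ^ 2) :=
  subset_selection_monotone_general d s s' hs hss' hs' lam lam' hlam hlam' hC
end
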